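/- Let A(p1,...,pn,q1,...,qm) be a classical propositional formula with only the indicated variables and let r be a variable not occurring in A. Suppose that for every function f : {1,...,m} → {0,1}, the formula A(p1,...,pn, ⊤^{f(1)}, ..., ⊤^{f(m)}) (substituting ⊤ for qi if f(i)=1 and ⊥ for qi if f(i)=0) is contingent. Then there exist propositional formulas B1(r,q1,...,qm), ..., Bn(r,q1,...,qm) such that r ↔ A(B1(r,q⃗), ..., Bn(r,q⃗), q1, ..., qm) is a tautology. -/
import Mathlib


/-- Classical propositional formulas over variable type `α`. -/
inductive PropForm (α : Type) : Type
  | var : α → PropForm α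
  | fal : PropForm α
  | imp : PropForm α → PropForm α → PropForm α

namespace PropForm

variable {α β : Type}

def neg (A : PropForm α) : PropForm α := imp A fal
def top : PropForm α := neg fal
def conj (A B : PropForm α) : PropForm α := neg (imp A (neg B))
def disj (A B : PropForm α) : PropForm α := imp (neg A) B
def biimp (A B : PropForm α) : PropForm α := conj (imp A B) (imp B A)
/-- `⊤^1 = ⊤`, `⊤^0 = ⊥`. -/
def const (b : Bool) : PropForm α := if b then top else fal

def eval (v : α → Bool) : PropForm α → Bool
  | var a => v a
  | fal => false
  | imp A B => !(eval v A) || eval v B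

/-- Simultaneous substitution. -/
def subst (s : α → PropForm β) : PropForm α → PropForm β
  | var a => s a
  | fal => fal
  | imp A B => imp (subst s A) (subst s B)

def Taut (A : PropForm α) : Prop := ∀ v, eval v A = true
def Unsat (A : PropForm α) : Prop := ∀ v, eval v A = false
def Contingent (A : PropForm α) : Prop := ¬ Taut A ∧ ¬ Unsat A

def bigDisj : List (PropForm α) → PropForm α := List.foldr disj fal
def bigConj : List (PropForm α) → PropForm α := List.foldr conj top

@[simp] lemma eval_neg (v : α → Bool) (A : PropForm α) : eval v (neg A) = !eval v A := by
  simp [neg, eval]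

@[simp] lemma eval_top (v : α → Bool) : eval v (top : PropForm α) = true := by
  simp [top, eval]

@[simp] lemma eval_conj (v : α → Bool) (A B : PropForm α) :
    eval v (conj A B) = (eval v A && eval v B) := by
  simp [conj, eval]

@[simp] lemma eval_disj (v : α → Bool) (A B : PropForm α) :
    eval v (disj A B) = (eval v A || eval v B) := by
  simp [disj, eval]

@[simp] lemma eval_const (v : α → Bool) (b : Bool) : eval v (const b : PropForm α) = b := by
  cases b <;> simp [const, eval]

@[simp] lemma eval_bigDisj (v : α → Bool) (l : List (PropForm α)) :
    eval v (bigDisj l) = l.any (eval v) := by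
  induction l with
  | nil => simp [bigDisj, eval]
  | cons a l ih => simp [bigDisj, List.foldr] at ih ⊢; simp [ih]

@[simp] lemma eval_bigConj (v : α → Bool) (l : List (PropForm α)) :
    eval v (bigConj l) = l.all (eval v) := by
  induction l with
  | nil => simp [bigConj]
  | cons a l ih => simp [bigConj, List.foldr] at ih ⊢; simp [ih]

lemma eval_subst (v : β → Bool) (s : α → PropForm β) (A : PropForm α) :
    eval v (A.subst s) = eval (fun a => eval v (s a)) A := by
  induction A with
  | var a => rfl
  | fal => rfl
  | imp A B ihA ihB => simp [subst, eval, ihA, ihB]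

def literal (w : α → Bool) (a : α) : PropForm α := if w a then var a else neg (var a)

@[simp] lemma eval_literal (v w : α → Bool) (a : α) :
    eval v (literal w a) = (v a == w a) := by
  cases h : w a <;> cases hv : v a <;> simp [literal, h, hv, eval]

variable [Fintype α] [DecidableEq α]

noncomputable def ofFun (F : (α → Bool) → Bool) : PropForm α :=
  bigDisj (((Finset.univ : Finset (α → Bool)).toList.filter (fun w => F w)).map
    (fun w => bigConj ((Finset.univ : Finset α).toList.map (literal w))))

@[simp] lemma eval_ofFun (F : (α → Bool) → Bool) (v : α → Bool) :
    eval v (ofFun F) = F v := by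
  rw [Bool.eq_iff_iff]
  simp only [ofFun, eval_bigDisj, List.any_eq_true, List.mem_map, List.mem_filter]
  constructor
  · rintro ⟨C, ⟨w, ⟨-, hFw⟩, rfl⟩, hw⟩
    simp only [eval_bigConj, List.all_eq_true, List.mem_map] at hw
    have : v = w := by
      funext a
      have := hw _ ⟨a, by simp, rfl⟩
      simpa using this
    rw [this]; simpa using hFw
  · intro hFv
    refine ⟨_, ⟨v, ⟨by simp [Finset.mem_toList], by simpa using hFv⟩, rfl⟩, ?_⟩
    simp [List.all_eq_true, List.mem_map]

end PropForm

/-- if `A(p⃗, ⊤^{f(1)},…,⊤^{f(m)})` is contingent for every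
`f : {1,…,m} → {0,1}`, then there exist formulas `B₁(r,q⃗),…,Bₙ(r,q⃗)` such that
`r ↔ A(B₁(r,q⃗),…,Bₙ(r,q⃗),q⃗)` is a tautology. -/
theorem contingent_subst_iff_var_param (n m : ℕ) (A : PropForm (Fin n ⊕ Fin m))
    (hA : ∀ f : Fin m → Bool,
      PropForm.Contingent (A.subst fun x =>
        match x with
        | Sum.inl i => PropForm.var i
        | Sum.inr j => PropForm.const (f j))) :
    ∃ B : Fin n → PropForm (Unit ⊕ Fin m),
      PropForm.Taut (PropForm.biimp (PropForm.var (Sum.inl ()))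
        (A.subst fun x =>
          match x with
          | Sum.inl i => B i
          | Sum.inr j => PropForm.var (Sum.inr j))) := by
  open PropForm in
  have key : ∀ f : Fin m → Bool, ∃ u : Fin n → Bool, ∃ w : Fin n → Bool,
      eval (Sum.elim u f) A = true ∧ eval (Sum.elim w f) A = false := by
    intro f
    obtain ⟨hT, hU⟩ := hA f
    simp only [Taut, Unsat, not_forall] at hT hU
    obtain ⟨w, hw⟩ := hT
    obtain ⟨u, hu⟩ := hU
    rw [eval_subst] at hw hu
    simp only [Bool.not_eq_true, Bool.not_eq_false] at hw hu
    refine ⟨u, w, ?_, ?_⟩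
    · convert hu using 2; funext x; cases x <;> simp [eval, eval_const]
    · convert hw using 2; funext x; cases x <;> simp [eval, eval_const]
  choose u w hu hw using key
  refine ⟨fun i => PropForm.ofFun (fun v => if v (Sum.inl ()) then u (v ∘ Sum.inr) i
      else w (v ∘ Sum.inr) i), ?_⟩
  intro v
  have hsub : eval v (A.subst fun x =>
      match x with
      | Sum.inl i => PropForm.ofFun (fun v => if v (Sum.inl ()) then u (v ∘ Sum.inr) i
          else w (v ∘ Sum.inr) i)
      | Sum.inr j => PropForm.var (Sum.inr j)) = v (Sum.inl ()) := by
    rw [eval_subst]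
    cases hr : v (Sum.inl ()) with
    | true =>
      have : (fun a => eval v ((fun x =>
          match x with
          | Sum.inl i => PropForm.ofFun (fun v => if v (Sum.inl ()) then u (v ∘ Sum.inr) i
              else w (v ∘ Sum.inr) i)
          | Sum.inr j => PropForm.var (Sum.inr j)) a)) = Sum.elim (u (v ∘ Sum.inr)) (v ∘ Sum.inr) := by
        funext x; cases x <;> simp [eval, hr]
      rw [this, hu]
    | false =>
      have : (fun a => eval v ((fun x =>
          match x with
          | Sum.inl i => PropForm.ofFun (fun v => if v (Sum.inl ()) then u (v ∘ Sum.inr) i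
              else w (v ∘ Sum.inr) i)
          | Sum.inr j => PropForm.var (Sum.inr j)) a)) = Sum.elim (w (v ∘ Sum.inr)) (v ∘ Sum.inr) := by
        funext x; cases x <;> simp [eval, hr]
      rw [this, hw]
  simp [PropForm.biimp, eval, hsub]
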